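/- Let M and N be matroids with finite disjoint ground sets S and T, let L be the free product M □ N, and let U ⊆ S ∪ T with |U| = |S|. If U contains an element of T that is not a loop of N, and the complement V = (S ∪ T) \ U contains an element of S that is not an isthmus (coloop) of M, then rk_L(U) > rk(M). -/

import Mathlib

/-!
Let `I` be a basis of `U` in `M` and `f ∉ U` a nonisthmus of `M`. Some basis of `M` avoids `f`,
so `rk(M) ≤ rk_M(S - f) ≤ |I| + |S \ U| - 1`, and `|S \ U| = |U ∩ T|` because `|U| = |S|`.
Hence `U ∩ T` has a subset `J` of size `rk(M) - |I| + 1` containing the nonloop `e` of `N`.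
Its nullity is at most `|J| - 1 = λ_M(I)`, so `I ∪ J ⊆ U` is independent in `M □ N` and has
`rk(M) + 1` elements.
-/

open Set Matroid

/-- The rank of a set `X` in a matroid `M`: the maximum cardinality of an
independent subset of `X`.  For `X = M.E` this is the rank of `M`. -/
noncomputable def mrk {α : Type*} (M : Matroid α) (X : Set α) : ℕ :=
  sSup (Set.ncard '' {I | M.Indep I ∧ I ⊆ X})

/-- A loop of a matroid `N` is an element contained in no independent set of `N`. -/
def IsLoopOf {α : Type*} (N : Matroid α) (e : α) : Prop := ∀ I, N.Indep I → e ∉ I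

/-- An isthmus (coloop) of a matroid `M` is an element contained in every basis of `M`. -/
def IsIsthmusOf {α : Type*} (M : Matroid α) (e : α) : Prop := ∀ B, M.IsBase B → e ∈ B

namespace Matroid

variable {α : Type*} {M : Matroid α} {I X Y : Set α}

lemma IsBasis'.ncard_le_of_indep [M.RankFinite] {J : Set α} (hI : M.IsBasis' I X)
    (hJ : M.Indep J) (hJX : J ⊆ X) : J.ncard ≤ I.ncard := by
  have hle : J.encard ≤ I.encard := hI.encard_eq_eRk ▸ hJ.encard_le_eRk_of_subset hJX
  rw [ncard_def, ncard_def]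
  exact ENat.toNat_le_toNat hle hI.indep.finite.encard_lt_top.ne

lemma IsBasis'.mrk_eq_ncard [M.RankFinite] (hI : M.IsBasis' I X) : mrk M X = I.ncard := by
  refine le_antisymm (csSup_le ⟨I.ncard, I, ⟨hI.indep, hI.subset⟩, rfl⟩ ?_)
    (le_csSup ⟨I.ncard, ?_⟩ ⟨I, ⟨hI.indep, hI.subset⟩, rfl⟩) <;>
  · rintro _ ⟨J, ⟨hJ, hJX⟩, rfl⟩
    exact hI.ncard_le_of_indep hJ hJX

lemma Indep.ncard_le_mrk [M.RankFinite] (hI : M.Indep I) (hIX : I ⊆ X) : I.ncard ≤ mrk M X := by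
  obtain ⟨J, hJ⟩ := M.exists_isBasis' X
  exact hJ.mrk_eq_ncard ▸ hJ.ncard_le_of_indep hI hIX

lemma Indep.mrk_eq_ncard [M.RankFinite] (hI : M.Indep I) : mrk M I = I.ncard :=
  hI.isBasis_self.isBasis'.mrk_eq_ncard

lemma mrk_le_mrk_add_ncard_sdiff [M.RankFinite] (hXY : (X \ Y).Finite) :
    mrk M X ≤ mrk M Y + (X \ Y).ncard := by
  obtain ⟨I, hI⟩ := M.exists_isBasis' X
  calc mrk M X = (I ∩ Y).ncard + (I \ Y).ncard := by
        rw [hI.mrk_eq_ncard, ncard_inter_add_ncard_sdiff_eq_ncard I Y hI.indep.finite]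
    _ ≤ mrk M Y + (X \ Y).ncard := add_le_add
        ((hI.indep.subset inter_subset_left).ncard_le_mrk inter_subset_right)
        (ncard_le_ncard (sdiff_subset_sdiff_left hI.subset) hXY)

lemma mrk_ground_le_mrk_sdiff_singleton [M.RankFinite] {f : α} (hf : ¬ IsIsthmusOf M f) :
    mrk M M.E ≤ mrk M (M.E \ {f}) := by
  obtain ⟨B, hB, hfB⟩ : ∃ B, M.IsBase B ∧ f ∉ B := by
    simpa [IsIsthmusOf] using hf
  rw [hB.isBasis_ground.isBasis'.mrk_eq_ncard]
  exact hB.indep.ncard_le_mrk (subset_sdiff_singleton hB.subset_ground hfB)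

lemma mrk_ground_lt_mrk_add_ncard_sdiff [M.Finite] {f : α} (hf : f ∈ M.E \ Y)
    (hfi : ¬ IsIsthmusOf M f) : mrk M M.E < mrk M Y + (M.E \ Y).ncard := by
  have hcard : ((M.E \ {f}) \ Y).ncard + 1 = (M.E \ Y).ncard := by
    rw [sdiff_sdiff_comm]
    exact ncard_sdiff_singleton_add_one hf M.ground_finite.sdiff
  have := mrk_le_mrk_add_ncard_sdiff (M := M) (X := M.E \ {f}) (Y := Y)
    M.ground_finite.sdiff.sdiff
  have := mrk_ground_le_mrk_sdiff_singleton hfi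
  omega

lemma one_le_mrk_of_not_isLoopOf [M.RankFinite] {e : α} (he : ¬ IsLoopOf M e) (heX : e ∈ X) :
    1 ≤ mrk M X := by
  obtain ⟨I, hI, heI⟩ : ∃ I, M.Indep I ∧ e ∈ I := by
    simpa [IsLoopOf] using he
  simpa using (hI.subset (singleton_subset_iff.2 heI)).ncard_le_mrk (singleton_subset_iff.2 heX)

end Matroid

lemma Set.ncard_sdiff_eq_ncard_inter_of_ncard_eq {α : Type*} {S T U : Set α} (hS : S.Finite)
    (hT : T.Finite) (hST : Disjoint S T) (hU : U ⊆ S ∪ T) (hUS : U.ncard = S.ncard) :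
    (S \ U).ncard = (U ∩ T).ncard := by
  have hsplit : U.ncard = (U ∩ S).ncard + (U ∩ T).ncard := by
    rw [← ncard_union_eq (hST.mono inter_subset_right inter_subset_right)
      (hS.subset inter_subset_right) (hT.subset inter_subset_right),
      ← inter_union_distrib_left, inter_eq_left.2 hU]
  have := ncard_inter_add_ncard_sdiff_eq_ncard S U hS
  rw [inter_comm] at this
  omega

/-- **Lemma 5.** Let `L = M □ N` and `U ⊆ S ∪ T` with `|U| = |S|`.  If `U` contains a
nonloop of `N` and the complement of `U` contains a nonisthmus of `M`, then
`rk_L(U) > rk(M)`. -/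
theorem stmt_7 {α : Type*} (M N : Matroid α) (S T : Set α)
    (hS : S.Finite) (hT : T.Finite) (hMS : M.E = S) (hNT : N.E = T)
    (hST : Disjoint S T)
    (L : Matroid α) (hLE : L.E = S ∪ T)
    (hLI : ∀ A : Set α, L.Indep A ↔ A ⊆ S ∪ T ∧ M.Indep (A ∩ S) ∧
      (A ∩ T).ncard - mrk N (A ∩ T) ≤ mrk M S - mrk M (A ∩ S))
    (U : Set α) (hU : U ⊆ S ∪ T) (hUcard : U.ncard = S.ncard)
    (hnl : ∃ e ∈ U ∩ T, ¬ IsLoopOf N e)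
    (hni : ∃ e ∈ ((S ∪ T) \ U) ∩ S, ¬ IsIsthmusOf M e) :
    mrk M S < mrk L U := by
  have : M.Finite := ⟨hMS ▸ hS⟩
  have : N.Finite := ⟨hNT ▸ hT⟩
  have : L.Finite := ⟨hLE ▸ hS.union hT⟩
  obtain ⟨e, heUT, he⟩ := hnl
  obtain ⟨f, ⟨⟨-, hfU⟩, hfS⟩, hf⟩ := hni
  obtain ⟨I, hI⟩ := M.exists_isBasis' U
  have hIS : I ⊆ S := hMS ▸ hI.indep.subset_ground
  have hIle : I.ncard ≤ mrk M S := hI.indep.ncard_le_mrk hIS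
  have hrank : mrk M S < I.ncard + (U ∩ T).ncard := by
    have := mrk_ground_lt_mrk_add_ncard_sdiff (Y := U) (hMS ▸ ⟨hfS, hfU⟩) hf
    rwa [hMS, hI.mrk_eq_ncard,
      ncard_sdiff_eq_ncard_inter_of_ncard_eq hS hT hST hU hUcard] at this
  obtain ⟨J, heJ, hJUT, hJcard⟩ := exists_subsuperset_card_eq (singleton_subset_iff.2 heUT)
    (n := mrk M S - I.ncard + 1) (by simp) (by omega)
  have hJT : J ⊆ T := hJUT.trans inter_subset_right
  have hJN : 1 ≤ mrk N J := one_le_mrk_of_not_isLoopOf he (singleton_subset_iff.1 heJ)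
  have hIJS : (I ∪ J) ∩ S = I := by
    rw [union_inter_distrib_right, inter_eq_left.2 hIS, (hST.symm.mono_left hJT).inter_eq,
      union_empty]
  have hIJT : (I ∪ J) ∩ T = J := by
    rw [union_inter_distrib_right, inter_eq_left.2 hJT, (hST.mono_left hIS).inter_eq,
      empty_union]
  have hIJ : L.Indep (I ∪ J) := by
    rw [hLI, hIJS, hIJT, hI.indep.mrk_eq_ncard]
    exact ⟨union_subset_union hIS hJT, hI.indep, by omega⟩
  calc mrk M S < (I ∪ J).ncard := by
        rw [ncard_union_eq (hST.mono hIS hJT) (hS.subset hIS) (hT.subset hJT)]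
        omega
    _ ≤ mrk L U := hIJ.ncard_le_mrk (union_subset hI.subset (hJUT.trans inter_subset_left))
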